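/- arXiv:2506.19165 — 3 statements merged into one kernel-verified Lean document; each statement's English description precedes it below -/
import Mathlib

section
/- Let A be a k-th order almost symmetric tensor on R^n with compact HOSVD A = S_red ×_1 V ×_2 V ×_3 ... ×_{k-1} V ×_k V_k, where V ∈ R^{n×r} and V_k ∈ R^{n×r_k} have orthonormal columns. Define A_red = S_red ×_k (V^T V_k). Then for every x ∈ R^n, V^T (A x^{k-1}) = A_red (V^T x)^{k-1}. -/
open Finset

/-- For a `(k+1)`-th order tensor `A` (first `k` modes of dimension `m`, last mode of
dimension `m'`), the contraction `A ×₁ x ×₂ x ⋯ ×ₖ x ∈ ℝ^{m'}` along the first `k` modes. -/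
def tvp {m m' k : ℕ} (A : (Fin k → Fin m) → Fin m' → ℝ) (x : Fin m → ℝ) : Fin m' → ℝ :=
  fun i => ∑ j : Fin k → Fin m, A j i * ∏ p, x (j p)

/-- Let `A` be a `(k+1)`-th order almost symmetric tensor on `ℝ^n` with compact HOSVD
`A = S_red ×₁ V ×₂ V ⋯ ×ₖ V ×_{k+1} V_k`, where `V ∈ ℝ^{n×r}` and `V_k ∈ ℝ^{n×r_k}`
have orthonormal columns.  Define `A_red = S_red ×_{k+1} (Vᵀ V_k)`.  Then for every
`x ∈ ℝ^n`, `Vᵀ (A x^k) = A_red (Vᵀ x)^k`. -/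
theorem hosvd_reduced_dynamics {n r rk k : ℕ}
    (A : (Fin k → Fin n) → Fin n → ℝ)
    (halmost : ∀ σ : Equiv.Perm (Fin k), ∀ j i, A (j ∘ σ) i = A j i)
    (S : (Fin k → Fin r) → Fin rk → ℝ)
    (V : Fin n → Fin r → ℝ) (Vk : Fin n → Fin rk → ℝ)
    (hV : ∀ b c : Fin r, ∑ a, V a b * V a c = if b = c then (1 : ℝ) else 0)
    (hVk : ∀ b c : Fin rk, ∑ a, Vk a b * Vk a c = if b = c then (1 : ℝ) else 0)
    (hA : ∀ j i, A j i = ∑ s : Fin k → Fin r, ∑ sk : Fin rk,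
        S s sk * (∏ p, V (j p) (s p)) * Vk i sk)
    (x : Fin n → ℝ) (b : Fin r) :
    ∑ a, V a b * tvp A x a
      = tvp (fun s b' => ∑ sk, S s sk * ∑ a, V a b' * Vk a sk)
          (fun c => ∑ a, V a c * x a) b := by
  have key : ∀ s : Fin k → Fin r,
      (∏ p, ∑ a, V a (s p) * x a)
        = ∑ j : Fin k → Fin n, ∏ p, V (j p) (s p) * x (j p) := by
    intro s
    rw [Finset.prod_univ_sum, Fintype.piFinset_univ]
  unfold tvp
  simp only [hA, key, Finset.sum_mul, Finset.mul_sum]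
  conv_lhs => enter [2,a]; rw [Finset.sum_comm]
  rw [Finset.sum_comm]
  refine Finset.sum_congr rfl fun s _ => ?_
  rw [Finset.sum_comm]
  refine Finset.sum_congr rfl fun j _ => ?_
  rw [Finset.sum_comm]
  refine Finset.sum_congr rfl fun sk _ => ?_
  refine Finset.sum_congr rfl fun a _ => ?_
  rw [Finset.prod_mul_distrib]
  ring
end

section
/- Let A be a k-th order tensor on R^n with compact HOSVD A = S_red ×_1 V ×_2 V ×_3 ... ×_{k-1} V ×_k V_k with V having orthonormal columns, b ∈ R^n, and b_red = V^T b. Then A_red b_red^{k-1} = V^T (A b^{k-1}), where A_red = S_red ×_k (V^T V_k). -/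
open Finset

/-- Let `A` be a `(k+1)`-th order tensor on `ℝ^n` with compact HOSVD
`A = S_red ×₁ V ×₂ V ⋯ ×ₖ V ×_{k+1} V_k` with `V` having orthonormal columns,
`b ∈ ℝ^n`, and `b_red = Vᵀ b`.  Then `A_red b_red^k = Vᵀ (A b^k)`, where
`A_red = S_red ×_{k+1} (Vᵀ V_k)`. -/
theorem hosvd_reduced_control_block {n r rk k : ℕ}
    (A : (Fin k → Fin n) → Fin n → ℝ)
    (S : (Fin k → Fin r) → Fin rk → ℝ)
    (V : Fin n → Fin r → ℝ) (Vk : Fin n → Fin rk → ℝ)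
    (hV : ∀ b c : Fin r, ∑ a, V a b * V a c = if b = c then (1 : ℝ) else 0)
    (hA : ∀ j i, A j i = ∑ s : Fin k → Fin r, ∑ sk : Fin rk,
        S s sk * (∏ p, V (j p) (s p)) * Vk i sk)
    (bvec : Fin n → ℝ) (c : Fin r) :
    tvp (fun s b' => ∑ sk, S s sk * ∑ a, V a b' * Vk a sk)
        (fun q => ∑ a, V a q * bvec a) c
      = ∑ a, V a c * tvp A bvec a := by
  simp only [tvp, hA]
  set F : (Fin k → Fin r) → Fin rk → Fin n → (Fin k → Fin n) → ℝ :=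
    fun s sk a j =>
      S s sk * (V a c * Vk a sk) * ((∏ p, V (j p) (s p)) * ∏ p, bvec (j p)) with hF
  have lhs_eq : (∑ s : Fin k → Fin r, (∑ sk, S s sk * ∑ a, V a c * Vk a sk) *
          ∏ p, ∑ a, V a (s p) * bvec a)
      = ∑ s, ∑ sk, ∑ a, ∑ j, F s sk a j := by
    refine Finset.sum_congr rfl fun s _ => ?_
    rw [Finset.prod_univ_sum, Finset.sum_mul]
    refine Finset.sum_congr rfl fun sk _ => ?_
    rw [show S s sk * (∑ a, V a c * Vk a sk) = ∑ a, S s sk * (V a c * Vk a sk) from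
      Finset.mul_sum _ _ _, Finset.sum_mul]
    refine Finset.sum_congr rfl fun a _ => ?_
    rw [Finset.mul_sum]
    refine Finset.sum_congr rfl fun j _ => ?_
    rw [hF]; dsimp only
    rw [Finset.prod_mul_distrib]
  have rhs_eq : (∑ a, V a c * ∑ j : Fin k → Fin n,
          (∑ s : Fin k → Fin r, ∑ sk, S s sk * (∏ p, V (j p) (s p)) * Vk a sk) *
            ∏ p, bvec (j p))
      = ∑ a, ∑ j, ∑ s, ∑ sk, F s sk a j := by
    refine Finset.sum_congr rfl fun a _ => ?_
    rw [Finset.mul_sum]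
    refine Finset.sum_congr rfl fun j _ => ?_
    rw [Finset.sum_mul, Finset.mul_sum]
    refine Finset.sum_congr rfl fun s _ => ?_
    rw [Finset.sum_mul, Finset.mul_sum]
    refine Finset.sum_congr rfl fun sk _ => ?_
    rw [hF]; dsimp only; ring
  rw [lhs_eq, rhs_eq]
  rw [show (∑ a, ∑ j, ∑ s, ∑ sk, F s sk a j)
      = ∑ a, ∑ s, ∑ j, ∑ sk, F s sk a j from
    Finset.sum_congr rfl fun a _ => Finset.sum_comm]
  rw [Finset.sum_comm (f := fun a s => ∑ j, ∑ sk, F s sk a j)]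
  refine Finset.sum_congr rfl fun s _ => ?_
  rw [show (∑ a, ∑ j, ∑ sk, F s sk a j) = ∑ a, ∑ sk, ∑ j, F s sk a j from
    Finset.sum_congr rfl fun a _ => Finset.sum_comm]
  exact Finset.sum_comm
end

section
/- Let A be a k-th order almost symmetric tensor on R^n, B ∈ R^{n×m}, C ∈ R^{l×n}, and let A_red, B_red = V^T B, C_red = C V be the reduced system obtained via compact HOSVD with factor V ∈ R^{n×r} having orthonormal columns. If x(t) solves ẋ = A x^{k-1} + B u(t) and x(t) ∈ range(V) for all t, then z(t) = V^T x(t) solves ż = A_red z^{k-1} + B_red u(t) and the outputs coincide: C x(t) = C_red z(t). -/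
open Finset

/-! Both sides of the reduced dynamics are `Vᵀ` applied to the full dynamics: a factor `V` in
each of the first `k` modes of `A` moves onto the argument as `Vᵀ x`, the output factor `Vk`
becomes `Vᵀ Vk`, and `x = V Vᵀ x` gives the output identity. -/

theorem tvp_modeProduct {m m' k r : ℕ} (T : (Fin k → Fin r) → Fin m' → ℝ)
    (V : Fin m → Fin r → ℝ) (y : Fin m → ℝ) :
    tvp (fun j i => ∑ s, T s i * ∏ p, V (j p) (s p)) y
      = tvp T (fun c => ∑ a, V a c * y a) := by
  funext i
  have hprod : ∀ s : Fin k → Fin r,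
      ∏ p, ∑ a, V a (s p) * y a = ∑ j : Fin k → Fin m, ∏ p, V (j p) (s p) * y (j p) := by
    intro s
    rw [prod_univ_sum, Fintype.piFinset_univ]
  simp only [tvp, hprod, sum_mul, mul_sum, prod_mul_distrib]
  rw [sum_comm]
  refine sum_congr rfl fun s _ => sum_congr rfl fun j _ => ?_
  ring

theorem tvp_outputModeProduct {m m' k r : ℕ} (S : (Fin k → Fin m) → Fin r → ℝ)
    (M : Fin m' → Fin r → ℝ) (z : Fin m → ℝ) :
    tvp (fun s i => ∑ c, S s c * M i c) z = fun i => ∑ c, M i c * tvp S z c := by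
  funext i
  simp only [tvp, sum_mul, mul_sum]
  rw [sum_comm]
  refine sum_congr rfl fun c _ => sum_congr rfl fun j _ => ?_
  ring

theorem sum_mul_sum_mul {ι κ : Type*} [Fintype ι] [Fintype κ] (v : ι → ℝ) (B : ι → κ → ℝ)
    (w : κ → ℝ) : ∑ a, v a * ∑ q, B a q * w q = ∑ q, (∑ a, v a * B a q) * w q :=
  Matrix.dotProduct_mulVec v B w

theorem sum_mul_tvp_hosvd {n m r rk k : ℕ} (A : (Fin k → Fin n) → Fin n → ℝ)
    (S : (Fin k → Fin r) → Fin rk → ℝ) (V : Fin n → Fin r → ℝ) (Vk : Fin n → Fin rk → ℝ)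
    (W : Fin n → Fin m → ℝ)
    (hA : ∀ j i, A j i = ∑ s : Fin k → Fin r, ∑ sk : Fin rk,
        S s sk * (∏ p, V (j p) (s p)) * Vk i sk)
    (y : Fin n → ℝ) (b : Fin m) :
    ∑ a, W a b * tvp A y a
      = tvp (fun s b' => ∑ sk, S s sk * ∑ a, W a b' * Vk a sk)
          (fun c => ∑ a, V a c * y a) b := by
  have hA' : A = fun j i => ∑ s, (∑ sk, S s sk * Vk i sk) * ∏ p, V (j p) (s p) := by
    funext j i
    simp only [hA, sum_mul]
    exact sum_congr rfl fun s _ => sum_congr rfl fun sk _ => by ring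
  rw [hA', tvp_modeProduct, tvp_outputModeProduct, tvp_outputModeProduct]
  simp only [mul_sum, sum_mul]
  rw [sum_comm]
  exact sum_congr rfl fun sk _ => sum_congr rfl fun a _ => by ring

theorem hosvd_reduced_io_system_general {n r rk k m l : ℕ}
    (A : (Fin k → Fin n) → Fin n → ℝ)
    (S : (Fin k → Fin r) → Fin rk → ℝ)
    (V : Fin n → Fin r → ℝ) (Vk : Fin n → Fin rk → ℝ)
    (hA : ∀ j i, A j i = ∑ s : Fin k → Fin r, ∑ sk : Fin rk,
        S s sk * (∏ p, V (j p) (s p)) * Vk i sk)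
    (B : Fin n → Fin m → ℝ) (C : Fin l → Fin n → ℝ)
    (u : ℝ → Fin m → ℝ) (x : ℝ → Fin n → ℝ)
    (hdyn : ∀ t a, HasDerivAt (fun s => x s a)
        (tvp A (x t) a + ∑ q, B a q * u t q) t)
    (hrange : ∀ t a, (∑ b : Fin r, V a b * ∑ a', V a' b * x t a') = x t a) :
    (∀ t b, HasDerivAt (fun s => ∑ a, V a b * x s a)
        (tvp (fun s b' => ∑ sk, S s sk * ∑ a, V a b' * Vk a sk)
            (fun c => ∑ a, V a c * x t a) b
          + ∑ q, (∑ a, V a b * B a q) * u t q) t) ∧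
    (∀ t c, ∑ a, C c a * x t a
        = ∑ b, (∑ a, C c a * V a b) * ∑ a, V a b * x t a) := by
  refine ⟨fun t b => ?_, fun t c => ?_⟩
  · have hz := HasDerivAt.fun_sum fun a (_ : a ∈ univ) => (hdyn t a).const_mul (V a b)
    refine hz.congr_deriv ?_
    rw [← sum_mul_tvp_hosvd A S V Vk V hA, ← sum_mul_sum_mul]
    simp only [mul_add, sum_add_distrib]
  · rw [← sum_mul_sum_mul]
    exact sum_congr rfl fun a _ => congrArg (C c a * ·) (hrange t a).symm

/-- Let `A` be a `(k+1)`-th order almost symmetric tensor on `ℝ^n`, `B ∈ ℝ^{n×m}`,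
`C ∈ ℝ^{l×n}`, and let `A_red = S_red ×_{k+1} (Vᵀ V_k)`, `B_red = Vᵀ B`, `C_red = C V`
be the reduced system obtained via the compact HOSVD
`A = S_red ×₁ V ⋯ ×ₖ V ×_{k+1} V_k` with `V` having orthonormal columns.  If `x(t)`
solves `ẋ = A x^k + B u(t)` and `x(t) ∈ range(V)` for all `t` (i.e. `V Vᵀ x = x`),
then `z(t) = Vᵀ x(t)` solves `ż = A_red z^k + B_red u(t)` and the outputs coincide:
`C x(t) = C_red z(t)`. -/
theorem hosvd_reduced_io_system {n r rk k m l : ℕ}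
    (A : (Fin k → Fin n) → Fin n → ℝ)
    (halmost : ∀ σ : Equiv.Perm (Fin k), ∀ j i, A (j ∘ σ) i = A j i)
    (S : (Fin k → Fin r) → Fin rk → ℝ)
    (V : Fin n → Fin r → ℝ) (Vk : Fin n → Fin rk → ℝ)
    (hV : ∀ b c : Fin r, ∑ a, V a b * V a c = if b = c then (1 : ℝ) else 0)
    (hA : ∀ j i, A j i = ∑ s : Fin k → Fin r, ∑ sk : Fin rk,
        S s sk * (∏ p, V (j p) (s p)) * Vk i sk)
    (B : Fin n → Fin m → ℝ) (C : Fin l → Fin n → ℝ)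
    (u : ℝ → Fin m → ℝ) (x : ℝ → Fin n → ℝ)
    (hdyn : ∀ t a, HasDerivAt (fun s => x s a)
        (tvp A (x t) a + ∑ q, B a q * u t q) t)
    (hrange : ∀ t a, (∑ b : Fin r, V a b * ∑ a', V a' b * x t a') = x t a) :
    (∀ t b, HasDerivAt (fun s => ∑ a, V a b * x s a)
        (tvp (fun s b' => ∑ sk, S s sk * ∑ a, V a b' * Vk a sk)
            (fun c => ∑ a, V a c * x t a) b
          + ∑ q, (∑ a, V a b * B a q) * u t q) t) ∧
    (∀ t c, ∑ a, C c a * x t a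
        = ∑ b, (∑ a, C c a * V a b) * ∑ a, V a b * x t a) :=
  hosvd_reduced_io_system_general A S V Vk hA B C u x hdyn hrange
end
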